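/- arXiv:math/0304284 — 7 statements merged into one kernel-verified Lean document; each statement's English description precedes it below -/
import Mathlib

section
/- A tree with nodes N_1, …, N_k (with inputs and outputs as specified) is precisely a bijection α : (⊔_i {x_{i1},…,x_{im_i}}) ⊔ {z} → (⊔_i {x_i}) ⊔ {z_1,…,z_l} (with l = (Σ m_i) − k + 1) such that there is no nonempty sequence of indices t_1, …, t_n as in the closed-loop criterion; equivalently, trees with these nodes correspond bijectively to acyclic such bijections. -/
variable {k l : ℕ} {m : Fin k → ℕ}

/-- Edges of the graph determined by `α` joining two of the nodes `N_1, …, N_k`. -/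
def NodeEdge (α : ((Σ i : Fin k, Fin (m i)) ⊕ Unit) ≃ (Fin k ⊕ Fin l)) : Type :=
  {p : (Σ i : Fin k, Fin (m i)) × Fin k // α (Sum.inl p.1) = Sum.inl p.2}

/-- The graph determined by `α` contains a closed loop (a cycle among the nodes). -/
def HasClosedLoop (α : ((Σ i : Fin k, Fin (m i)) ⊕ Unit) ≃ (Fin k ⊕ Fin l)) : Prop :=
  ∃ (n : ℕ) (e : Fin (n + 1) → NodeEdge α) (v : Fin (n + 1) → Fin k),
    Function.Injective e ∧ Function.Injective v ∧
      ∀ j, s((e j).1.1.1, (e j).1.2) = s(v j, v (j + 1))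

/-- The owner of a domain element. -/
def ownerD : ((Σ i : Fin k, Fin (m i)) ⊕ Unit) → (Fin k ⊕ Unit) :=
  Sum.elim (fun p => Sum.inl p.1) (fun _ => Sum.inr ())

/-- The owner of a codomain element. -/
def ownerC : (Fin k ⊕ Fin l) → (Fin k ⊕ Unit) :=
  Sum.elim Sum.inl (fun _ => Sum.inr ())

/-- Adjacency in the full graph on `{N_1, …, N_k, N}` determined by `α`. -/
def Adj (α : ((Σ i : Fin k, Fin (m i)) ⊕ Unit) ≃ (Fin k ⊕ Fin l))
    (v w : Fin k ⊕ Unit) : Prop :=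
  ∃ y, s(ownerD y, ownerC (α y)) = s(v, w)

/-- Connectedness of the full graph determined by `α`. -/
def Conn (α : ((Σ i : Fin k, Fin (m i)) ⊕ Unit) ≃ (Fin k ⊕ Fin l)) : Prop :=
  ∀ v w, Relation.ReflTransGen (Adj α) v w

/-- `α` is a tree: the graph it determines is connected and has no closed loop. -/
def IsTree (α : ((Σ i : Fin k, Fin (m i)) ⊕ Unit) ≃ (Fin k ⊕ Fin l)) : Prop :=
  Conn α ∧ ¬ HasClosedLoop α

/-- The closed-loop criterion: a nonempty cyclic sequence of indices `t_1, …, t_n` with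
`α (x_{t_j b_j}) = x_{t_{j-1}}`. -/
def SeqCond (α : ((Σ i : Fin k, Fin (m i)) ⊕ Unit) ≃ (Fin k ⊕ Fin l)) : Prop :=
  ∃ (n : ℕ) (t : Fin (n + 1) → Fin k),
    ∀ j, ∃ b : Fin (m (t j)), α (Sum.inl ⟨t j, b⟩) = Sum.inl (t (j - 1))

/-!
Let `parent α` send a node to the node into one of whose inputs its output is plugged, and fix
the formal node `N`. The edges between nodes are the pairs `{i, parent α i}`, and the closed-loop
criterion describes exactly a periodic orbit of `parent α` avoiding `N`. Conversely, every closed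
loop is mapped into itself by `parent α`: its edges are as many as its vertices and have distinct
output ends, so every vertex on it is the output end of one of them. A self-map of a finite set
has a periodic point, so such a loop carries a periodic orbit. Finally, if `N` is the only periodic
point, the parent chain of every node, which eventually becomes periodic, ends at `N`, so the graph
is connected.
-/

open Function Relation Set

namespace Function

variable {β : Type*} {f : β → β}

theorem exists_iterate_mem_periodicPts [Finite β] (f : β → β) (x : β) :
    ∃ n, f^[n] x ∈ periodicPts f := by
  obtain ⟨m, n, hne, heq⟩ := Finite.exists_ne_map_eq_of_infinite (f^[·] x)
  wlog hlt : m < n generalizing m n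
  · exact this n m hne.symm heq.symm (by omega)
  refine ⟨m, mk_mem_periodicPts (n := n - m) (by omega) ?_⟩
  rw [IsPeriodicPt, IsFixedPt, ← iterate_add_apply, Nat.sub_add_cancel hlt.le]
  exact heq.symm

theorem exists_mem_periodicPts_of_mapsTo [Finite β] {s : Set β} (hf : MapsTo f s s) {x : β}
    (hx : x ∈ s) : ∃ y ∈ s, y ∈ periodicPts f :=
  have ⟨n, hn⟩ := exists_iterate_mem_periodicPts f x
  ⟨_, hf.iterate n hx, hn⟩

theorem IsFixedPt.eq_of_iterate_eq {x y : β} {n : ℕ} (hy : IsFixedPt f y)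
    (hx : x ∈ periodicPts f) (h : f^[n] x = y) : x = y := by
  obtain ⟨p, hp, hpx⟩ := hx
  calc x = f^[p * n] x := (hpx.mul_const n).symm
    _ = f^[p * n - n] (f^[n] x) := by
      rw [← iterate_add_apply, Nat.sub_add_cancel (Nat.le_mul_of_pos_left n hp)]
    _ = y := by rw [h, (hy.iterate _).eq]

open Fin.NatCast in
theorem isPeriodicPt_of_cycle {n : ℕ} {v : Fin (n + 1) → β} (hv : ∀ j, f (v j) = v (j + 1)) :
    IsPeriodicPt f (n + 1) (v 0) := by
  have h_iterate : ∀ c : ℕ, f^[c] (v 0) = v c := by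
    intro c
    induction c with
    | zero => simp
    | succ c ih => rw [iterate_succ_apply', ih, hv, Nat.cast_succ]
  rw [IsPeriodicPt, IsFixedPt, h_iterate, Fin.natCast_self]

theorem exists_injective_cycle {x : β} (hx : x ∈ periodicPts f) :
    ∃ (d : ℕ) (v : Fin (d + 1) → β),
      Injective v ∧ (∀ j, v j = f^[j] x) ∧ ∀ j, f (v j) = v (j + 1) := by
  obtain ⟨d, hd⟩ := Nat.exists_eq_add_one.mpr (minimalPeriod_pos_of_mem_periodicPts hx)
  refine ⟨d, fun j => f^[j] x, fun a b hab => ?_, fun _ => rfl, fun j => ?_⟩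
  · exact Fin.ext (iterate_injOn_Iio_minimalPeriod (by rw [mem_Iio, hd]; exact a.isLt)
      (by rw [mem_Iio, hd]; exact b.isLt) hab)
  · change f (f^[j] x) = f^[(j + 1 : Fin (d + 1)).val] x
    rw [← iterate_succ_apply' f, ← iterate_mod_minimalPeriod_eq, hd, Fin.val_add, Fin.val_one',
      Nat.add_mod_mod]

end Function

section

variable {α : ((Σ i : Fin k, Fin (m i)) ⊕ Unit) ≃ (Fin k ⊕ Fin l)}

/-- The formal node `N` is its own parent, so that cycles among the nodes are the periodic
orbits of `parent α` other than `N`. -/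
def parent (α : ((Σ i : Fin k, Fin (m i)) ⊕ Unit) ≃ (Fin k ⊕ Fin l)) :
    Fin k ⊕ Unit → Fin k ⊕ Unit :=
  Sum.elim (fun i => ownerD (α.symm (Sum.inl i))) fun _ => Sum.inr ()

def HasCycle (α : ((Σ i : Fin k, Fin (m i)) ⊕ Unit) ≃ (Fin k ⊕ Fin l)) : Prop :=
  ∃ i : Fin k, Sum.inl i ∈ periodicPts (parent α)

theorem ownerD_eq_inl_iff {y : (Σ i : Fin k, Fin (m i)) ⊕ Unit} {j : Fin k} :
    ownerD y = Sum.inl j ↔ ∃ b : Fin (m j), y = Sum.inl ⟨j, b⟩ := by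
  rcases y with ⟨j', b'⟩ | ⟨⟩
  · constructor
    · rintro ⟨⟩
      exact ⟨b', rfl⟩
    · rintro ⟨b, ⟨⟩⟩
      rfl
  · simp [ownerD]

theorem parent_inl_eq_inl_iff {i j : Fin k} :
    parent α (Sum.inl i) = Sum.inl j ↔ ∃ b, α (Sum.inl ⟨j, b⟩) = Sum.inl i := by
  simp only [parent, Sum.elim_inl, ownerD_eq_inl_iff, Equiv.symm_apply_eq]
  exact exists_congr fun _ => eq_comm

theorem isFixedPt_parent_inr : IsFixedPt (parent α) (Sum.inr ()) := rfl

theorem NodeEdge.snd_injective : Injective fun e : NodeEdge α => e.1.2 := by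
  intro e e' h
  have h_input : e.1.1 = e'.1.1 :=
    Sum.inl_injective (α.injective (by rw [e.2, e'.2]; exact congrArg Sum.inl h))
  exact Subtype.ext (Prod.ext h_input h)

instance : Std.Symm (Adj α) := ⟨fun _ _ ⟨y, hy⟩ => ⟨y, hy.trans Sym2.eq_swap⟩⟩

theorem reflTransGen_adj_parent (x : Fin k ⊕ Unit) : ReflTransGen (Adj α) x (parent α x) := by
  rcases x with i | ⟨⟩
  · refine .single ⟨α.symm (Sum.inl i), ?_⟩
    rw [Equiv.apply_symm_apply]
    exact Sym2.eq_swap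
  · exact .refl

theorem reflTransGen_adj_iterate_parent (n : ℕ) (x : Fin k ⊕ Unit) :
    ReflTransGen (Adj α) x ((parent α)^[n] x) := by
  induction n with
  | zero => exact .refl
  | succ n ih => rw [iterate_succ_apply']; exact ih.trans (reflTransGen_adj_parent _)

theorem conn_of_not_hasCycle (h : ¬ HasCycle α) : Conn α := by
  have h_root : ∀ x, ReflTransGen (Adj α) x (Sum.inr ()) := by
    intro x
    obtain ⟨n, hn⟩ := exists_iterate_mem_periodicPts (parent α) x
    rcases hx : (parent α)^[n] x with i | ⟨⟩
    · exact absurd ⟨i, hx ▸ hn⟩ h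
    · exact hx ▸ reflTransGen_adj_iterate_parent n x
  exact fun v w => (h_root v).trans (Std.Symm.symm _ _ (h_root w))

theorem HasCycle.exists_injective_cycle (h : HasCycle α) :
    ∃ (d : ℕ) (v : Fin (d + 1) → Fin k),
      Injective v ∧ ∀ j, parent α (Sum.inl (v j)) = Sum.inl (v (j + 1)) := by
  obtain ⟨i, hi⟩ := h
  obtain ⟨d, u, hu, hu_iterate, hu_cycle⟩ := Function.exists_injective_cycle hi
  have hu_inl : ∀ j, ∃ w, u j = Sum.inl w := by
    intro j
    rcases hj : u j with w | ⟨⟩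
    · exact ⟨w, rfl⟩
    · exact absurd (isFixedPt_parent_inr.eq_of_iterate_eq hi ((hu_iterate j).symm.trans hj))
        Sum.inl_ne_inr
  choose w hw using hu_inl
  exact ⟨d, w, fun a b hab => hu (by rw [hw, hw, hab]), fun j => by rw [← hw, ← hw, hu_cycle]⟩

theorem seqCond_iff_hasCycle : SeqCond α ↔ HasCycle α := by
  constructor
  · rintro ⟨n, t, ht⟩
    have h_cycle : ∀ j, parent α (Sum.inl (t j)) = Sum.inl (t (j + 1)) := fun j =>
      parent_inl_eq_inl_iff.mpr (by simpa using ht (j + 1))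
    exact ⟨t 0, mk_mem_periodicPts n.succ_pos (isPeriodicPt_of_cycle h_cycle)⟩
  · intro h
    obtain ⟨n, t, -, ht⟩ := h.exists_injective_cycle
    exact ⟨n, t, fun j => parent_inl_eq_inl_iff.mp (by simpa using ht (j - 1))⟩

theorem HasCycle.hasClosedLoop (h : HasCycle α) : HasClosedLoop α := by
  obtain ⟨d, v, hv, h_cycle⟩ := h.exists_injective_cycle
  choose b hb using fun j => parent_inl_eq_inl_iff.mp (h_cycle j)
  exact ⟨d, fun j => ⟨(⟨v (j + 1), b j⟩, v j), hb j⟩, v,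
    fun i j hij => hv (congrArg (·.1.2) hij), hv, fun _ => Sym2.eq_swap⟩

theorem HasClosedLoop.hasCycle (h : HasClosedLoop α) : HasCycle α := by
  obtain ⟨n, e, v, he, -, hev⟩ := h
  have h_parent : ∀ j, parent α (Sum.inl (e j).1.2) = Sum.inl (e j).1.1.1 :=
    fun j => parent_inl_eq_inl_iff.mpr ⟨_, (e j).2⟩
  have h_ends : ∀ j, ∀ x ∈ s((e j).1.1.1, (e j).1.2), x ∈ range v := by
    intro j x hx
    rw [hev j, Sym2.mem_iff] at hx
    rcases hx with rfl | rfl <;> exact mem_range_self _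
  choose σ hσ using fun j => h_ends j _ (Sym2.mem_mk_right _ _)
  have hσ_surj : Surjective σ := Finite.injective_iff_surjective.mp fun a b hab =>
    he (NodeEdge.snd_injective (by simp only [← hσ, hab]))
  have h_maps : MapsTo (parent α) (Sum.inl '' range v) (Sum.inl '' range v) := by
    rintro _ ⟨_, ⟨j, rfl⟩, rfl⟩
    obtain ⟨j', rfl⟩ := hσ_surj j
    rw [hσ, h_parent]
    exact mem_image_of_mem _ (h_ends j' _ (Sym2.mem_mk_left _ _))
  obtain ⟨_, ⟨i, -, rfl⟩, hi⟩ := exists_mem_periodicPts_of_mapsTo h_maps ⟨v 0, mem_range_self 0, rfl⟩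
  exact ⟨i, hi⟩

theorem hasClosedLoop_iff_hasCycle : HasClosedLoop α ↔ HasCycle α :=
  ⟨HasClosedLoop.hasCycle, HasCycle.hasClosedLoop⟩

end

theorem tree_iff_no_seqCond_general
    (α : ((Σ i : Fin k, Fin (m i)) ⊕ Unit) ≃ (Fin k ⊕ Fin l)) :
    IsTree α ↔ ¬ SeqCond α := by
  rw [IsTree, seqCond_iff_hasCycle, hasClosedLoop_iff_hasCycle]
  exact ⟨And.right, fun h => ⟨conn_of_not_hasCycle h, h⟩⟩

/-- A tree with nodes `N_1, …, N_k` is precisely a bijection `α` with no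
sequence of indices as in the closed-loop criterion: `α` defines a tree if and only if no
such sequence exists, so trees correspond bijectively to acyclic such bijections. -/
theorem tree_iff_no_seqCond (hl : l + k = (∑ i, m i) + 1)
    (α : ((Σ i : Fin k, Fin (m i)) ⊕ Unit) ≃ (Fin k ⊕ Fin l)) :
    IsTree α ↔ ¬ SeqCond α :=
  tree_iff_no_seqCond_general α
end

section
/- Let x be a (k−1)-opetope, α a k-opetope, and γ_1, γ_2 generating face maps x → α. If γ_1 = γ_2 as morphisms of O, then γ_1 = γ_2 as elements of the generating set G_k; in other words, the relations in O do not identify distinct generating face maps. -/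
open CategoryTheory

/-- The data from which the category `O` of opetopes is presented: for each `k` the
category `O_k` of `k`-opetopes; for each `(k+1)`-opetope `α` a set `G k x α` of generating
face maps from each of its `(k-1)`-dimensional faces `x`; for each face map `γ : x → α`
and morphism `g : α ⟶ β` of `O_{k+1}` the unique restriction of `g` to the specified face
(a `(k)`-morphism `x ⟶ y` together with the corresponding face map `y → β`); and the
identifications of faces where composition occurs, recorded as a relation `Ident` on
composable pairs of face maps mediated by an object-morphism `f : x ⟶ y`. -/
structure OpData where
  Obj : ℕ → Type
  [cat : ∀ k, SmallCategory (Obj k)]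
  G : ∀ k, Obj k → Obj (k + 1) → Type
  restr : ∀ {k : ℕ} {x : Obj k} {α β : Obj (k + 1)},
    G k x α → (α ⟶ β) → Σ y : Obj k, (x ⟶ y) × G k y β
  Ident : ∀ {k : ℕ} {x y : Obj k} {α β : Obj (k + 1)} {θ : Obj (k + 2)},
    G k x α → G (k + 1) α θ → G k y β → G (k + 1) β θ → (x ⟶ y) → Prop

attribute [instance] OpData.cat

/-- Objects of the category of opetopes: opetopes of all dimensions. -/
def OpData.TotalObj (D : OpData) : Type := Σ k, D.Obj k

/-- Generating morphisms of the category of opetopes: the morphisms of each `O_k`, and the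
generating face maps. -/
inductive OpData.Gen (D : OpData) : D.TotalObj → D.TotalObj → Type
  | ofHom {k : ℕ} {a b : D.Obj k} : (a ⟶ b) → D.Gen ⟨k, a⟩ ⟨k, b⟩
  | face {k : ℕ} {x : D.Obj k} {α : D.Obj (k + 1)} : D.G k x α → D.Gen ⟨k, x⟩ ⟨k + 1, α⟩

instance (D : OpData) : Quiver D.TotalObj := ⟨D.Gen⟩

/-- The relations of the presentation of the category of opetopes:
1. face maps commute with restrictions of morphisms of `O_{k+1}`;
2. faces are identified where composition occurs;
3. composition in each `O_k` is respected;
4. identities in each `O_k` are respected. -/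
inductive OpData.Rel (D : OpData) :
    ∀ ⦃a b : Paths D.TotalObj⦄, (a ⟶ b) → (a ⟶ b) → Prop
  | rel1 {k : ℕ} {x : D.Obj k} {α β : D.Obj (k + 1)} (γ : D.G k x α) (g : α ⟶ β) :
      OpData.Rel D
        ((Quiver.Hom.toPath (OpData.Gen.face γ)).comp (Quiver.Hom.toPath (OpData.Gen.ofHom g)))
        ((Quiver.Hom.toPath (OpData.Gen.ofHom (D.restr γ g).2.1)).comp
          (Quiver.Hom.toPath (OpData.Gen.face (D.restr γ g).2.2)))
  | rel2 {k : ℕ} {x y : D.Obj k} {α β : D.Obj (k + 1)} {θ : D.Obj (k + 2)}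
      (γ₁ : D.G k x α) (γ₂ : D.G (k + 1) α θ) (γ₃ : D.G k y β) (γ₄ : D.G (k + 1) β θ)
      (f : x ⟶ y) (h : D.Ident γ₁ γ₂ γ₃ γ₄ f) :
      OpData.Rel D
        ((Quiver.Hom.toPath (OpData.Gen.face γ₁)).comp (Quiver.Hom.toPath (OpData.Gen.face γ₂)))
        ((Quiver.Hom.toPath (OpData.Gen.ofHom f)).comp
          ((Quiver.Hom.toPath (OpData.Gen.face γ₃)).comp (Quiver.Hom.toPath (OpData.Gen.face γ₄))))
  | rel3 {k : ℕ} {a b c : D.Obj k} (f : a ⟶ b) (g : b ⟶ c) :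
      OpData.Rel D
        ((Quiver.Hom.toPath (OpData.Gen.ofHom f)).comp (Quiver.Hom.toPath (OpData.Gen.ofHom g)))
        (Quiver.Hom.toPath (OpData.Gen.ofHom (f ≫ g)))
  | rel4 {k : ℕ} (a : D.Obj k) :
      OpData.Rel D (Quiver.Hom.toPath (OpData.Gen.ofHom (𝟙 a))) Quiver.Path.nil

/-- The relations as a `HomRel` on the free category on the generators. -/
def OpData.relO (D : OpData) : HomRel (Paths D.TotalObj) := @fun a b f g => @OpData.Rel D a b f g

/-- The category `O = Opetope` of opetopes, presented by generators and relations. -/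
abbrev OpData.O (D : OpData) := CategoryTheory.Quotient D.relO

/-- The inclusion of `O_k` into `O`. -/
def OpData.incl (D : OpData) (k : ℕ) : D.Obj k ⥤ D.O where
  obj a := ⟨⟨k, a⟩⟩
  map f := (CategoryTheory.Quotient.functor D.relO).map (Quiver.Hom.toPath (OpData.Gen.ofHom f))
  map_id a := by
    have h := CategoryTheory.Quotient.sound D.relO (OpData.Rel.rel4 (D := D) a)
    exact h.trans (CategoryTheory.Functor.map_id _ _)
  map_comp f g := by
    have h := CategoryTheory.Quotient.sound D.relO (OpData.Rel.rel3 (D := D) f g)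
    exact h.symm.trans (CategoryTheory.Functor.map_comp _ _ _)

/-! Fix a `k`-opetope `x`. Every morphism out of `x` of dimension `k` or `k + 1` has a normal
form: a morphism `f : x ⟶ y` of `O_k`, or such an `f` followed by a generating face map;
everything of higher dimension is collapsed to a single junk value `other`. Generators act on
these normal forms by post-composition, morphisms of `O_{k+1}` being pushed past face maps with
`restr`. Relations 1 and 2 hold on the nose and relations 3 and 4 by functoriality of
restriction, so `O` acts on normal forms; the face map `γ` sends the identity of `x` to the normal
form `(𝟙 x, γ)`, from which `γ` can be read off. -/

namespace OpData

def RestrId (D : OpData) : Prop :=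
  ∀ {k : ℕ} {x : D.Obj k} {α : D.Obj (k + 1)} (γ : D.G k x α), D.restr γ (𝟙 α) = ⟨x, 𝟙 x, γ⟩

def RestrComp (D : OpData) : Prop :=
  ∀ {k : ℕ} {x : D.Obj k} {α β δ : D.Obj (k + 1)} (γ : D.G k x α) (g : α ⟶ β) (g' : β ⟶ δ),
    D.restr γ (g ≫ g') =
      ⟨(D.restr (D.restr γ g).2.2 g').1,
       (D.restr γ g).2.1 ≫ (D.restr (D.restr γ g).2.2 g').2.1,
       (D.restr (D.restr γ g).2.2 g').2.2⟩

variable {D : OpData} {k k' : ℕ}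

inductive NormalHom (x : D.Obj k) : D.TotalObj → Type
  | ofHom {b : D.Obj k} (f : x ⟶ b) : NormalHom x ⟨k, b⟩
  | face {y : D.Obj k} {β : D.Obj (k + 1)} (f : x ⟶ y) (γ : D.G k y β) : NormalHom x ⟨k + 1, β⟩
  | other {B : D.TotalObj} : NormalHom x B

variable {x : D.Obj k}

def Gen.act : ∀ {A B : D.TotalObj}, D.Gen A B → NormalHom x A → NormalHom x B
  | _, _, .ofHom g, .ofHom f => .ofHom (f ≫ g)
  | _, _, .ofHom g, .face f γ => .face (f ≫ (D.restr γ g).2.1) (D.restr γ g).2.2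
  | _, _, .face γ, .ofHom f => .face f γ
  | _, _, _, _ => .other

def actPath {A : D.TotalObj} :
    ∀ {B : D.TotalObj}, Quiver.Path A B → NormalHom x A → NormalHom x B
  | _, .nil, s => s
  | _, .cons p e, s => e.act (actPath p s)

theorem actPath_comp {A B C : Paths D.TotalObj} (p : A ⟶ B) (q : B ⟶ C)
    (s : NormalHom x A) : actPath (p ≫ q) s = actPath q (actPath p s) := by
  induction q using Quiver.Path.rec with
  | nil => rfl
  | cons q e ih => exact congrArg e.act ih

theorem Gen.act_ofHom_face {y : D.Obj k} {α β : D.Obj (k + 1)} (g : α ⟶ β) (f : x ⟶ y)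
    (γ : D.G k y α) :
    (Gen.ofHom g).act (NormalHom.face f γ) = .face (f ≫ (D.restr γ g).2.1) (D.restr γ g).2.2 :=
  rfl

theorem Gen.act_ofHom_id (hid : D.RestrId) {a : D.Obj k'} (s : NormalHom x ⟨k', a⟩) :
    (Gen.ofHom (𝟙 a)).act s = s := by
  cases s with
  | ofHom f => exact congrArg NormalHom.ofHom (Category.comp_id f)
  | face f γ => rw [Gen.act_ofHom_face, hid, Category.comp_id]
  | other => rfl

theorem Gen.act_ofHom_comp (hcomp : D.RestrComp) {a b c : D.Obj k'} (f : a ⟶ b) (g : b ⟶ c)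
    (s : NormalHom x ⟨k', a⟩) :
    (Gen.ofHom (f ≫ g)).act s = (Gen.ofHom g).act ((Gen.ofHom f).act s) := by
  cases s with
  | ofHom f₀ => exact congrArg NormalHom.ofHom (Category.assoc f₀ f g).symm
  | face f₀ γ =>
    rw [Gen.act_ofHom_face, Gen.act_ofHom_face, Gen.act_ofHom_face, hcomp, Category.assoc]
  | other => rfl

theorem actPath_eq_of_rel (hid : D.RestrId) (hcomp : D.RestrComp) {A B : Paths D.TotalObj}
    {p q : A ⟶ B} (h : D.Rel p q) : actPath (x := x) p = actPath q := by
  funext s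
  cases h with
  | rel1 γ g => cases s <;> rfl
  | rel2 γ₁ γ₂ γ₃ γ₄ f _ => cases s <;> rfl
  | rel3 f g => exact (Gen.act_ofHom_comp hcomp f g s).symm
  | rel4 a => exact Gen.act_ofHom_id hid s

theorem actPath_eq_of_compClosure (hid : D.RestrId) (hcomp : D.RestrComp)
    {A B : Paths D.TotalObj} {p q : A ⟶ B} (h : HomRel.CompClosure D.relO p q) :
    actPath (x := x) p = actPath q := by
  cases h with
  | intro _ _ f m₁ m₂ g hm =>
    funext s
    rw [actPath_comp, actPath_comp, actPath_comp, actPath_comp, actPath_eq_of_rel hid hcomp hm]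

def actHom (hid : D.RestrId) (hcomp : D.RestrComp) {X Y : D.O} (φ : X ⟶ Y) :
    NormalHom x X.as → NormalHom x Y.as :=
  Quot.lift actPath (fun _ _ => actPath_eq_of_compClosure hid hcomp) φ

end OpData

theorem face_maps_not_identified_general (D : OpData)
    (hid : ∀ {k : ℕ} {x : D.Obj k} {α : D.Obj (k + 1)} (γ : D.G k x α),
      D.restr γ (𝟙 α) = ⟨x, 𝟙 x, γ⟩)
    (hcomp : ∀ {k : ℕ} {x : D.Obj k} {α β δ : D.Obj (k + 1)}
      (γ : D.G k x α) (g : α ⟶ β) (g' : β ⟶ δ),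
      D.restr γ (g ≫ g') =
        ⟨(D.restr (D.restr γ g).2.2 g').1,
         (D.restr γ g).2.1 ≫ (D.restr (D.restr γ g).2.2 g').2.1,
         (D.restr (D.restr γ g).2.2 g').2.2⟩)
    {k : ℕ} {x : D.Obj k} {α : D.Obj (k + 1)} (γ₁ γ₂ : D.G k x α)
    (h : (CategoryTheory.Quotient.functor D.relO).map
            (Quiver.Hom.toPath (OpData.Gen.face γ₁)) =
         (CategoryTheory.Quotient.functor D.relO).map
            (Quiver.Hom.toPath (OpData.Gen.face γ₂))) :
    γ₁ = γ₂ := by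
  have hface := congrFun (congrArg (OpData.actHom hid hcomp) h) (.ofHom (𝟙 x))
  change OpData.NormalHom.face (𝟙 x) γ₁ = .face (𝟙 x) γ₂ at hface
  simpa using hface

/-- Suppose (as holds for opetopes) that each `O_k` is equivalent to a
discrete category (hom-sets are subsingletons) and that restriction of morphisms of
`O_{k+1}` along face maps is functorial (unique restriction).  Let `x` be a `k`-opetope,
`α` a `(k+1)`-opetope and `γ₁, γ₂ ∈ G_{k+1}` generating face maps `x → α`.  If `γ₁ = γ₂`
as morphisms of `O` then `γ₁ = γ₂` as generators: the relations in `O` do not identify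
distinct generating face maps. -/
theorem face_maps_not_identified (D : OpData)
    (hsub : ∀ (k : ℕ) (a b : D.Obj k), Subsingleton (a ⟶ b))
    (hid : ∀ {k : ℕ} {x : D.Obj k} {α : D.Obj (k + 1)} (γ : D.G k x α),
      D.restr γ (𝟙 α) = ⟨x, 𝟙 x, γ⟩)
    (hcomp : ∀ {k : ℕ} {x : D.Obj k} {α β δ : D.Obj (k + 1)}
      (γ : D.G k x α) (g : α ⟶ β) (g' : β ⟶ δ),
      D.restr γ (g ≫ g') =
        ⟨(D.restr (D.restr γ g).2.2 g').1,
         (D.restr γ g).2.1 ≫ (D.restr (D.restr γ g).2.2 g').2.1,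
         (D.restr (D.restr γ g).2.2 g').2.2⟩)
    {k : ℕ} {x : D.Obj k} {α : D.Obj (k + 1)} (γ₁ γ₂ : D.G k x α)
    (h : (CategoryTheory.Quotient.functor D.relO).map
            (Quiver.Hom.toPath (OpData.Gen.face γ₁)) =
         (CategoryTheory.Quotient.functor D.relO).map
            (Quiver.Hom.toPath (OpData.Gen.face γ₂))) :
    γ₁ = γ₂ :=
  face_maps_not_identified_general D hid hcomp γ₁ γ₂ h
end

section
/- The term-rewriting system on words of generators of O, obtained by orienting the equations (γ then g ⇒ γg then γ′; composable pairs in O_{k−1} ⇒ their composite; composable pairs in O_k ⇒ their composite; identity then γ ⇒ γ) from left to right, is terminating: any reduction of a word with m morphisms of O_{k−1}, one face map, and j morphisms of O_k terminates in at most 2j + m steps. -/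
open CategoryTheory

instance OpData.quiverTotal (D : OpData) : Quiver D.TotalObj := ⟨D.Gen⟩


/-- The basic rewriting rules, obtained by orienting the equations of the presentation of
`O` from left to right:  `γ` then `g` rewrites to `γg` then `γ'` (restriction); a
composable pair of morphisms of `O_k` rewrites to its composite; an identity followed by a
face map `γ` rewrites to `γ`. -/
inductive OpData.ORel (D : OpData) :
    ∀ {a b : Paths D.TotalObj}, (a ⟶ b) → (a ⟶ b) → Prop
  | r1 {k : ℕ} {x : D.Obj k} {α β : D.Obj (k + 1)} (γ : D.G k x α) (g : α ⟶ β) :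
      OpData.ORel D
        ((Quiver.Hom.toPath (OpData.Gen.face γ)).comp
          (Quiver.Hom.toPath (OpData.Gen.ofHom g)))
        ((Quiver.Hom.toPath (OpData.Gen.ofHom (D.restr γ g).2.1)).comp
          (Quiver.Hom.toPath (OpData.Gen.face (D.restr γ g).2.2)))
  | r2 {k : ℕ} {a b c : D.Obj k} (f : a ⟶ b) (g : b ⟶ c) :
      OpData.ORel D
        ((Quiver.Hom.toPath (OpData.Gen.ofHom f)).comp
          (Quiver.Hom.toPath (OpData.Gen.ofHom g)))
        (Quiver.Hom.toPath (OpData.Gen.ofHom (f ≫ g)))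
  | r3 {k : ℕ} {x : D.Obj k} {α : D.Obj (k + 1)} (γ : D.G k x α) :
      OpData.ORel D
        ((Quiver.Hom.toPath (OpData.Gen.ofHom (𝟙 x))).comp
          (Quiver.Hom.toPath (OpData.Gen.face γ)))
        (Quiver.Hom.toPath (OpData.Gen.face γ))

/-- One rewriting step: a basic rule applied anywhere inside a word of generators. -/
inductive OpData.Step (D : OpData) :
    ∀ {a b : Paths D.TotalObj}, (a ⟶ b) → (a ⟶ b) → Prop
  | mk {a b c d : Paths D.TotalObj} (p : a ⟶ b) {u v : b ⟶ c} (q : c ⟶ d)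
      (h : D.ORel u v) : OpData.Step D (p ≫ u ≫ q) (p ≫ v ≫ q)

/-- The weight of a generator relative to dimension `j`: `1` for a morphism of `O_j`,
`0` otherwise. -/
def OpData.genWt (D : OpData) (j : ℕ) : ∀ {a b : D.TotalObj}, D.Gen a b → ℕ
  | _, _, @OpData.Gen.ofHom _ k' _ _ _ => if k' = j then 1 else 0
  | _, _, @OpData.Gen.face _ _ _ _ _ => 0

/-- The number of generating morphisms of `O_j` occurring in a word of generators. -/
def OpData.countAt (D : OpData) (j : ℕ) :
    ∀ {a b : D.TotalObj}, Quiver.Path a b → ℕ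
  | _, _, Quiver.Path.nil => 0
  | _, _, Quiver.Path.cons p e => OpData.countAt D j p + D.genWt j e

/-!
Give each morphism of `O_d` occurring in a word the weight one plus the number of face maps to
its left, which on a word starting at a `k`-opetope is `d + 1 - k`. Sliding a morphism of
`O_{k+1}` across a face map (it becomes a morphism of `O_k`) lowers its weight by one, composing
two morphisms or deleting an identity lowers the total weight, and no rule changes the number of
face maps, so the total weight drops at every rewriting step in any context. A word with `m`
morphisms of `O_k`, one face map and `j` morphisms of `O_{k+1}` has weight `m + 2j`.
-/

namespace OpData

variable {D : OpData}

def Gen.faceCount {a b : D.TotalObj} : D.Gen a b → ℕ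
  | .ofHom _ => 0
  | .face _ => 1

def Gen.homCount {a b : D.TotalObj} : D.Gen a b → ℕ
  | .ofHom _ => 1
  | .face _ => 0

lemma Gen.dim_add_faceCount {a b : D.TotalObj} (e : D.Gen a b) : a.1 + e.faceCount = b.1 := by
  cases e <;> rfl

def faceCount {a : D.TotalObj} : ∀ {b : D.TotalObj}, Quiver.Path a b → ℕ
  | _, .nil => 0
  | _, .cons p e => faceCount p + Gen.faceCount e

def homCount {a : D.TotalObj} : ∀ {b : D.TotalObj}, Quiver.Path a b → ℕ
  | _, .nil => 0
  | _, .cons p e => homCount p + Gen.homCount e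

def weight {a : D.TotalObj} : ∀ {b : D.TotalObj}, Quiver.Path a b → ℕ
  | _, .nil => 0
  | _, .cons p e => weight p + Gen.homCount e * (faceCount p + 1)

lemma dim_add_faceCount {a : D.TotalObj} :
    ∀ {b : D.TotalObj} (p : Quiver.Path a b), a.1 + faceCount p = b.1
  | _, .nil => rfl
  | _, .cons p e => by
    rw [faceCount, ← add_assoc, dim_add_faceCount p, Gen.dim_add_faceCount]

lemma faceCount_comp {a b : D.TotalObj} (p : Quiver.Path a b) :
    ∀ {c} (q : Quiver.Path b c), faceCount (p.comp q) = faceCount p + faceCount q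
  | _, .nil => rfl
  | _, .cons q e => by rw [Quiver.Path.comp, faceCount, faceCount, faceCount_comp p q, add_assoc]

lemma homCount_comp {a b : D.TotalObj} (p : Quiver.Path a b) :
    ∀ {c} (q : Quiver.Path b c), homCount (p.comp q) = homCount p + homCount q
  | _, .nil => rfl
  | _, .cons q e => by rw [Quiver.Path.comp, homCount, homCount, homCount_comp p q, add_assoc]

lemma weight_comp {a b : D.TotalObj} (p : Quiver.Path a b) :
    ∀ {c} (q : Quiver.Path b c),
      weight (p.comp q) = weight p + weight q + homCount q * faceCount p
  | _, .nil => by simp [weight, homCount]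
  | _, .cons q e => by
    rw [Quiver.Path.comp, weight, weight, homCount, weight_comp p q, faceCount_comp]; ring

section ORel

variable {a b : D.TotalObj} {u v : Quiver.Path a b}

lemma ORel.faceCount_eq (h : D.ORel u v) : faceCount v = faceCount u := by
  cases h <;> rfl

lemma ORel.homCount_le (h : D.ORel u v) : homCount v ≤ homCount u := by
  cases h
  exacts [le_refl 1, Nat.le_succ 1, Nat.zero_le 1]

lemma ORel.weight_lt (h : D.ORel u v) : weight v < weight u := by
  cases h
  exacts [Nat.lt_succ_self 1, Nat.lt_succ_self 1, Nat.zero_lt_one]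

end ORel

lemma weight_comp_comp_lt {a b c d : D.TotalObj} (p : Quiver.Path a b) {u v : Quiver.Path b c}
    (q : Quiver.Path c d) (hF : faceCount v = faceCount u) (hH : homCount v ≤ homCount u)
    (hW : weight v < weight u) : weight (p.comp (v.comp q)) < weight (p.comp (u.comp q)) := by
  have hHp := Nat.mul_le_mul_right (faceCount p) hH
  simp only [weight_comp, homCount_comp, hF]
  linarith

lemma Step.weight_lt {a b : D.TotalObj} {u v : Quiver.Path a b} (h : D.Step u v) :
    weight v < weight u := by
  obtain ⟨p, q, h⟩ := h
  exact weight_comp_comp_lt p q h.faceCount_eq h.homCount_le h.weight_lt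

lemma Gen.homCount_mul_eq_genWt {b c : D.TotalObj} (e : D.Gen b c) {k : ℕ} (hk : k ≤ b.1)
    (hc : c.1 ≤ k + 1) : e.homCount * (b.1 - k + 1) = D.genWt k e + 2 * D.genWt (k + 1) e := by
  cases e with
  | ofHom _ => dsimp only [Gen.homCount, genWt] at hk hc ⊢; split_ifs <;> omega
  | face _ => simp [Gen.homCount, genWt]

lemma weight_eq_countAt {a : D.TotalObj} :
    ∀ {c : D.TotalObj} (p : Quiver.Path a c), c.1 ≤ a.1 + 1 →
      weight p = D.countAt a.1 p + 2 * D.countAt (a.1 + 1) p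
  | _, .nil, _ => by simp [weight, countAt]
  | _, .cons (b := b) p e, hc => by
    have hpb := dim_add_faceCount p
    have heb := Gen.dim_add_faceCount e
    have he := Gen.homCount_mul_eq_genWt e (k := a.1) (by omega) hc
    rw [weight, countAt, countAt, weight_eq_countAt p (by omega),
      show faceCount p + 1 = b.1 - a.1 + 1 by omega]
    linarith

end OpData

lemma Nat.le_of_chain_lt {α : Type*} (μ : α → ℕ) (w : ℕ → α) (n : ℕ)
    (h : ∀ i < n, μ (w (i + 1)) < μ (w i)) : n ≤ μ (w 0) := by
  have descent : ∀ i ≤ n, μ (w i) + i ≤ μ (w 0) := by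
    intro i hi
    induction i with
    | zero => rfl
    | succ i ih => have := h i hi; have := ih (by omega); omega
  exact le_of_add_le_right (descent n le_rfl)

/-- The term-rewriting system on words of generators of `O` is
terminating:  any reduction sequence starting from a word from a `k`-opetope `x` to a
`(k+1)`-opetope `α` containing `m` morphisms of `O_k`, one face map, and `j` morphisms of
`O_{k+1}` has length at most `2j + m`. -/
theorem rewriting_terminates (D : OpData) {k : ℕ} {x : D.Obj k} {α : D.Obj (k + 1)}
    (n : ℕ) (w : ℕ → @Quiver.Path D.TotalObj (OpData.quiverTotal D) ⟨k, x⟩ ⟨k + 1, α⟩)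
    (hw : ∀ i < n, D.Step (w i) (w (i + 1))) :
    n ≤ 2 * D.countAt (k + 1) (w 0) + D.countAt k (w 0) := by
  have hlen := Nat.le_of_chain_lt OpData.weight w n fun i hi => (hw i hi).weight_lt
  have hw0 : OpData.weight (w 0) = D.countAt k (w 0) + 2 * D.countAt (k + 1) (w 0) :=
    OpData.weight_eq_countAt (w 0) le_rfl
  omega
end

section
/- Let Q be a tidy symmetric multicategory with category of objects C equivalent to the discrete category S via C → S, and let f : X → S be a function. Then the pullback multicategory Q_X, whose object category o(Q_X) is the pullback of X → S ← C and whose hom-sets are Q_X(a_1,…,a_k; a) ≅ Q(fh(a_1),…,fh(a_k); fh(a)), is again tidy. -/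
open CategoryTheory

universe u

/-- A (slim rendering of a) symmetric multicategory with a *category* of objects: arrows
have a finite family of sources and one target, there are identities, multicomposition,
and a symmetric action permuting the sources. -/
structure SymMulticategory where
  Obj : Type u
  [instCat : SmallCategory Obj]
  Hom : ∀ {I : Type} [Fintype I], (I → Obj) → Obj → Type
  ident : ∀ a : Obj, Hom (fun _ : Fin 1 => a) a
  comp : ∀ {I : Type} [Fintype I] [DecidableEq I] {J : I → Type} [∀ i, Fintype (J i)]
    {xs : I → Obj} {a : Obj} {ys : ∀ i, J i → Obj},
    Hom xs a → (∀ i, Hom (ys i) (xs i)) → Hom (fun p : Σ i, J i => ys p.1 p.2) a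
  symm : ∀ {I : Type} [Fintype I] (σ : Equiv.Perm I) {xs : I → Obj} {a : Obj},
    Hom xs a → Hom (xs ∘ σ) a

attribute [instance] SymMulticategory.instCat

/-- `Q` is freely symmetric: the symmetric action on arrows is free. -/
def SymMulticategory.FreelySymmetric (Q : SymMulticategory) : Prop :=
  ∀ {I : Type} [Fintype I] (σ : Equiv.Perm I) {xs : I → Q.Obj} {a : Q.Obj}
    (f : Q.Hom xs a), HEq (Q.symm σ f) f → σ = 1

/-- `Q` is tidy: it is freely symmetric and its category of objects is equivalent to a
discrete category. -/
def SymMulticategory.Tidy (Q : SymMulticategory) : Prop :=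
  Q.FreelySymmetric ∧ ∃ S : Type, Nonempty (Q.Obj ≌ Discrete S)

/-- The pullback multicategory `Q_X` of a symmetric multicategory `Q` whose category of
objects `C` is equivalent to the discrete category on `S` via `e`, along a function
`f : X → S`:  its category of objects is the pullback of `X → S ← C` (so that the
projection `h : o(Q_X) → X` is an equivalence), and its hom-sets are
`Q_X(a_1,…,a_k; a) ≅ Q(fh(a_1),…,fh(a_k); fh(a))`, with composition, identities and the
symmetric action inherited from `Q`. -/
def SymMulticategory.pullback (Q : SymMulticategory) (S : Type) (e : Q.Obj ⥤ Discrete S)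
    (X : Type) (f : X → S) : SymMulticategory where
  Obj := ObjectProperty.FullSubcategory fun p : Discrete X × Q.Obj => f p.1.as = (e.obj p.2).as
  Hom xs a := Q.Hom (fun i => (xs i).obj.2) a.obj.2
  ident a := Q.ident a.obj.2
  comp F G := Q.comp F G
  symm := fun {I} _ σ {xs} {a} F => Q.symm σ F

/-! The arrows and the symmetric action of `Q_X` are literally those of `Q`, so free
symmetry is inherited. A faithful functor into a discrete category has a thin source, so the
projection `h` from the pullback `X ×_S C` to `X` is faithful; it is full because `e` is full,
and essentially surjective because `e` is. Hence `h` is an equivalence. -/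

namespace CategoryTheory

section DiscretePullback

variable {C : Type*} [Category C] {S X : Type} (e : C ⥤ Discrete S) (f : X → S)

theorem Functor.subsingleton_hom_of_faithful_discrete [e.Faithful] (c c' : C) :
    Subsingleton (c ⟶ c') :=
  ⟨fun _ _ => e.map_injective (Subsingleton.elim _ _)⟩

def discretePullbackFst :
    ObjectProperty.FullSubcategory (fun p : Discrete X × C => f p.1.as = (e.obj p.2).as) ⥤
      Discrete X :=
  ObjectProperty.ι _ ⋙ Prod.fst _ _

instance [e.Faithful] : (discretePullbackFst e f).Faithful where
  map_injective {_ _} _ _ _ := by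
    have := e.subsingleton_hom_of_faithful_discrete
    exact ObjectProperty.hom_ext _ (Prod.ext (Subsingleton.elim _ _) (Subsingleton.elim _ _))

instance [e.Full] : (discretePullbackFst e f).Full where
  map_surjective {a b} g := by
    have hab : (e.obj a.obj.2).as = (e.obj b.obj.2).as := by
      rw [← a.property, ← b.property, Discrete.eq_of_hom (show a.obj.1 ⟶ b.obj.1 from g)]
    exact ⟨ObjectProperty.homMk (g, e.preimage (eqToHom (Discrete.ext hab))), rfl⟩

instance [e.EssSurj] : (discretePullbackFst e f).EssSurj where
  mem_essImage x := by
    obtain ⟨c, ⟨i⟩⟩ := Functor.EssSurj.mem_essImage (F := e) ⟨f x.as⟩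
    exact ⟨⟨(x, c), (Discrete.eq_of_hom i.hom).symm⟩, ⟨Iso.refl _⟩⟩

instance [e.IsEquivalence] : (discretePullbackFst e f).IsEquivalence where

end DiscretePullback

end CategoryTheory

namespace SymMulticategory

theorem FreelySymmetric.pullback {Q : SymMulticategory} (hQ : Q.FreelySymmetric) (S : Type)
    (e : Q.Obj ⥤ Discrete S) (X : Type) (f : X → S) : (Q.pullback S e X f).FreelySymmetric :=
  fun σ _ _ g h => hQ σ g h

end SymMulticategory

/-- If `Q` is a tidy symmetric multicategory with category of objects
equivalent to the discrete category on `S`, and `f : X → S` is a function, then the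
pullback multicategory `Q_X` is again tidy. -/
theorem pullback_tidy (Q : SymMulticategory) (S : Type) (e : Q.Obj ⥤ Discrete S)
    [e.IsEquivalence] (X : Type) (f : X → S) (hQ : Q.Tidy) :
    (Q.pullback S e X f).Tidy :=
  ⟨SymMulticategory.FreelySymmetric.pullback hQ.1 S e X f, X,
    ⟨(discretePullbackFst e f).asEquivalence⟩⟩
end

section
/- The category OSet of opetopic sets is cocomplete: for any small diagram D : I → OSet, the opetopic set Z with Z(k) = colim_{I} D(I)(k) computed in Set, with frames induced from representatives (well-defined because morphisms of opetopic sets preserve frames), is a colimit of D. -/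
open CategoryTheory

variable (𝒪 : Type) [SmallCategory 𝒪] (dim : 𝒪 → ℕ)

/-- An opetopic set over a category `𝒪` of opetopes (graded by dimension `dim`): for each
`k ≥ 0` a set of `k`-cells, each with an underlying `k`-opetope (its shape, i.e. its
frame), and for each face `g : x → shape c` of the shape of a cell `c` a cell labelling
that face (the frame data), compatibly with identities and composition. -/
structure OpetopicSet where
  cell : ℕ → Type
  shape : ∀ {k : ℕ}, cell k → 𝒪
  dim_shape : ∀ {k : ℕ} (c : cell k), dim (shape c) = k
  face : ∀ {k : ℕ} (c : cell k) {x : 𝒪}, (x ⟶ shape c) → cell (dim x)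
  shape_face : ∀ {k : ℕ} (c : cell k) {x : 𝒪} (g : x ⟶ shape c), shape (face c g) = x
  face_id : ∀ {k : ℕ} (c : cell k), HEq (face c (𝟙 (shape c))) c
  face_comp : ∀ {k : ℕ} (c : cell k) {x y : 𝒪} (g : x ⟶ shape c) (h : y ⟶ x),
    face (face c g) (h ≫ eqToHom (shape_face c g).symm) = face c (h ≫ g)

/-- A morphism of opetopic sets: levelwise functions on cells preserving shapes and
frames (faces). -/
@[ext]
structure OpetopicSetHom (X Y : OpetopicSet 𝒪 dim) where
  app : ∀ k, X.cell k → Y.cell k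
  shape_app : ∀ {k : ℕ} (c : X.cell k), Y.shape (app k c) = X.shape c
  face_app : ∀ {k : ℕ} (c : X.cell k) {x : 𝒪} (g : x ⟶ X.shape c),
    app (dim x) (X.face c g) = Y.face (app k c) (g ≫ eqToHom (shape_app c).symm)

/-- The category `OSet` of opetopic sets. -/
instance : Category (OpetopicSet 𝒪 dim) where
  Hom X Y := OpetopicSetHom 𝒪 dim X Y
  id X :=
    { app := fun _ c => c
      shape_app := fun _ => rfl
      face_app := by intros; simp }
  comp F G :=
    { app := fun k c => G.app k (F.app k c)
      shape_app := by intro k c; rw [G.shape_app, F.shape_app]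
      face_app := by
        intro k c x g
        rw [F.face_app, G.face_app]
        congr 1
        simp }
  id_comp F := rfl
  comp_id F := rfl
  assoc F G H := rfl

/-- The functor sending an opetopic set to its set of `k`-cells. -/
def cellFunctor (k : ℕ) : OpetopicSet 𝒪 dim ⥤ Type where
  obj X := X.cell k
  map F := TypeCat.ofHom (F.app k)
  map_id _ := rfl
  map_comp _ _ := rfl

/-! Colimits are computed levelwise in `Type`. A cell of the levelwise colimit gets the shape
and the (classes of the) faces of any representative; this is independent of the representative
because morphisms of opetopic sets preserve shapes and faces, and the axioms of an opetopic set
are then inherited from the representatives. -/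

lemma sigma_mk_eq_of_comp_eqToHom {C : Type*} [Category C] {P : C → Type*} {s s' : C}
    (h : s' = s) (φ : ∀ x, (x ⟶ s) → P x) (ψ : ∀ x, (x ⟶ s') → P x)
    (hφψ : ∀ x (g : x ⟶ s), φ x g = ψ x (g ≫ eqToHom h.symm)) :
    (⟨s, φ⟩ : Σ t, ∀ x, (x ⟶ t) → P x) = ⟨s', ψ⟩ := by
  subst h
  simp only [eqToHom_refl, Category.comp_id] at hφψ
  congr
  funext x g
  exact hφψ x g

namespace OpetopicSet

open Limits

variable {𝒪 dim} {J : Type} [SmallCategory J] (F : J ⥤ OpetopicSet 𝒪 dim)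

abbrev LevelwiseColimitCell (k : ℕ) : Type := (F ⋙ cellFunctor 𝒪 dim k).ColimitType

abbrev ιCell (k : ℕ) (j : J) (c : (F.obj j).cell k) : LevelwiseColimitCell F k :=
  (F ⋙ cellFunctor 𝒪 dim k).ιColimitType j c

lemma ιCell_heq {k k' : ℕ} (hk : k = k') {j : J} {c : (F.obj j).cell k}
    {c' : (F.obj j).cell k'} (hc : HEq c c') : HEq (ιCell F k j c) (ιCell F k' j c') := by
  subst hk
  rw [eq_of_heq hc]

/-- The frame of a cell (its shape and the classes of its faces) as a cocone, so that it
descends to the levelwise colimit. -/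
def frameCocone (k : ℕ) : (F ⋙ cellFunctor 𝒪 dim k).CoconeTypes where
  pt := Σ s : 𝒪, ∀ x, (x ⟶ s) → LevelwiseColimitCell F (dim x)
  ι j c := ⟨(F.obj j).shape c, fun _ g => ιCell F _ j ((F.obj j).face c g)⟩
  ι_naturality {j j'} f := by
    funext c
    refine (sigma_mk_eq_of_comp_eqToHom ((F.map f).shape_app c) _ _ fun x g => ?_).symm
    exact (Functor.ιColimitType_map (F ⋙ cellFunctor 𝒪 dim _) f _).symm.trans
      (congrArg (ιCell F _ j') ((F.map f).face_app c g))

def levelwiseColimit : OpetopicSet 𝒪 dim where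
  cell := LevelwiseColimitCell F
  shape {k} q := ((F ⋙ cellFunctor 𝒪 dim k).descColimitType (frameCocone F k) q).1
  dim_shape {k} q := by
    obtain ⟨j, c, rfl⟩ := Functor.ιColimitType_jointly_surjective _ q
    exact (F.obj j).dim_shape c
  face {k} q := fun {x} => ((F ⋙ cellFunctor 𝒪 dim k).descColimitType (frameCocone F k) q).2 x
  shape_face {k} q := by
    obtain ⟨j, c, rfl⟩ := Functor.ιColimitType_jointly_surjective _ q
    exact (F.obj j).shape_face c
  face_id {k} q := by
    obtain ⟨j, c, rfl⟩ := Functor.ιColimitType_jointly_surjective _ q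
    exact ιCell_heq F ((F.obj j).dim_shape c) ((F.obj j).face_id c)
  face_comp {k} q := by
    obtain ⟨j, c, rfl⟩ := Functor.ιColimitType_jointly_surjective _ q
    intro x y g h
    exact congrArg (ιCell F _ j) ((F.obj j).face_comp c g h)

def levelwiseColimitCocone : Cocone F where
  pt := levelwiseColimit F
  ι.app j :=
    { app := fun k => ιCell F k j
      shape_app := fun _ => rfl
      face_app := fun c x g =>
        congrArg (fun g => ιCell F _ j ((F.obj j).face c g)) (Category.comp_id g).symm }
  ι.naturality j j' f := by
    apply OpetopicSetHom.ext
    funext k c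
    exact Functor.ιColimitType_map (F ⋙ cellFunctor 𝒪 dim k) f c

noncomputable def isColimitLevelwiseColimitCocone : IsColimit (levelwiseColimitCocone F) where
  desc s :=
    { app := fun k => (F ⋙ cellFunctor 𝒪 dim k).descColimitType
        ((F ⋙ cellFunctor 𝒪 dim k).coconeTypesEquiv.symm ((cellFunctor 𝒪 dim k).mapCocone s))
      shape_app := fun {k} q => by
        obtain ⟨j, c, rfl⟩ := Functor.ιColimitType_jointly_surjective _ q
        exact (s.ι.app j).shape_app c
      face_app := fun {k} q => by
        obtain ⟨j, c, rfl⟩ := Functor.ιColimitType_jointly_surjective _ q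
        exact (s.ι.app j).face_app c }
  fac s j := rfl
  uniq s m hm := by
    apply OpetopicSetHom.ext
    funext k q
    obtain ⟨j, c, rfl⟩ := Functor.ιColimitType_jointly_surjective _ q
    exact congrFun (congrArg (fun φ : F.obj j ⟶ s.pt => φ.app k) (hm j)) c

noncomputable def isColimitMapCoconeCellFunctor (k : ℕ) :
    IsColimit ((cellFunctor 𝒪 dim k).mapCocone (levelwiseColimitCocone F)) :=
  Types.TypeMax.colimitCoconeIsColimit.{0, 0} (F ⋙ cellFunctor 𝒪 dim k)

end OpetopicSet

/-- The category `OSet` of opetopic sets is cocomplete, and colimits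
are computed levelwise in `Set`: the functors taking an opetopic set to its set of
`k`-cells preserve small colimits (the frames on the levelwise colimit being induced from
representatives, which is well defined because morphisms of opetopic sets preserve
frames). -/
theorem oset_cocomplete :
    Limits.HasColimitsOfSize.{0, 0} (OpetopicSet 𝒪 dim) ∧
      ∀ k : ℕ, Nonempty (Limits.PreservesColimitsOfSize.{0, 0} (cellFunctor 𝒪 dim k)) := by
  open Limits OpetopicSet in
  refine ⟨⟨fun {J} _ => ⟨fun F => HasColimit.mk ⟨_, isColimitLevelwiseColimitCocone F⟩⟩⟩,
    fun k => ⟨⟨fun {J} _ => ⟨fun {F} => ?_⟩⟩⟩⟩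
  exact preservesColimit_of_preserves_colimit_cocone (isColimitLevelwiseColimitCocone F)
    (isColimitMapCoconeCellFunctor F k)
end

section
/- There is a full and faithful functor G : O → OSet sending a k-opetope α to the opetopic set α̂ whose m-cells are isomorphism classes in the slice category O/α of morphisms x → α from m-opetopes, and sending a morphism h : α → β to postcomposition [(x, f)] ↦ [(x, h ∘ f)]. -/
open CategoryTheory

variable (𝒪 : Type) [SmallCategory 𝒪] (dim : 𝒪 → ℕ)

/-- The realization `α̂` of an opetope `α` as an opetopic set: its `m`-cells are the
`m`-dimensional faces of `α`, i.e. the morphisms `x → α` in `𝒪` from `m`-opetopes `x`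
(in particular its `dim α`-cells are just the identity of `α`, and it has no cells above
dimension `dim α`), with frames given by composition of face maps. -/
def realize (α : 𝒪) : OpetopicSet 𝒪 dim where
  cell m := {p : Σ x : 𝒪, x ⟶ α // dim p.1 = m}
  shape p := p.1.1
  dim_shape p := p.2
  face := fun {k} p {x} g => ⟨⟨x, g ≫ p.1.2⟩, rfl⟩
  shape_face := by intros; rfl
  face_id c := by
    rcases c with ⟨⟨x, f⟩, rfl⟩
    exact heq_of_eq (Subtype.ext (by simp))
  face_comp := by
    intros
    apply Subtype.ext
    simp
    
/-- The realization functor `G : 𝒪 → OSet`, acting on morphisms by postcomposition. -/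
def realizeFunctor : 𝒪 ⥤ OpetopicSet 𝒪 dim where
  obj := realize 𝒪 dim
  map {α β} h :=
    { app := fun m p => ⟨⟨p.1.1, p.1.2 ≫ h⟩, p.2⟩
      shape_app := fun _ => rfl
      face_app := by
        intro m c x g
        apply Subtype.ext
        simp [realize]
        erw [eqToHom_refl, Category.comp_id, Category.assoc] }
  map_id α := by
    apply OpetopicSetHom.ext
    funext m p
    refine Subtype.ext ?_
    show (⟨p.1.1, p.1.2 ≫ 𝟙 α⟩ : Σ x : 𝒪, x ⟶ α) = p.1
    simp
  map_comp {α β δ} h h' := by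
    apply OpetopicSetHom.ext
    funext m p
    refine Subtype.ext ?_
    show (⟨p.1.1, p.1.2 ≫ h ≫ h'⟩ : Σ x : 𝒪, x ⟶ δ)
        = ⟨p.1.1, (p.1.2 ≫ h) ≫ h'⟩
    simp

/-! The top cell `𝟙 α` generates `α̂`: the cell `g : x → α` is its face along `g`. Hence a
morphism `α̂ → Y` is determined by the image of the top cell, and for `Y = β̂` that image is a
cell of shape `α`, i.e. a morphism `α → β`, whose postcomposition recovers the morphism. -/

variable {𝒪 dim}

theorem OpetopicSet.face_congr (Y : OpetopicSet 𝒪 dim) {k : ℕ} {c c' : Y.cell k} (e : c = c')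
    {x α : 𝒪} (g : x ⟶ α) (p : Y.shape c = α) (p' : Y.shape c' = α) :
    Y.face c (g ≫ eqToHom p.symm) = Y.face c' (g ≫ eqToHom p'.symm) := by
  subst e
  rfl

def realizeTopCell (α : 𝒪) : (realize 𝒪 dim α).cell (dim α) := ⟨⟨α, 𝟙 α⟩, rfl⟩

theorem realize_hom_app_eq_face_realizeTopCell {α x : 𝒪} {Y : OpetopicSet 𝒪 dim}
    (F : realize 𝒪 dim α ⟶ Y) (g : x ⟶ α) :
    F.app (dim x) ⟨⟨x, g⟩, rfl⟩ =
      Y.face (F.app _ (realizeTopCell α)) (g ≫ eqToHom (F.shape_app (realizeTopCell α)).symm) := by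
  refine Eq.trans ?_ (F.face_app (realizeTopCell α) g)
  congr 1
  exact Subtype.ext (by simp [realize, realizeTopCell])

theorem realize_hom_ext {α : 𝒪} {Y : OpetopicSet 𝒪 dim} {F G : realize 𝒪 dim α ⟶ Y}
    (h : F.app _ (realizeTopCell α) = G.app _ (realizeTopCell α)) : F = G := by
  apply OpetopicSetHom.ext
  funext m c
  obtain ⟨⟨x, g⟩, rfl⟩ := c
  rw [realize_hom_app_eq_face_realizeTopCell F, realize_hom_app_eq_face_realizeTopCell G]
  exact Y.face_congr h g (F.shape_app _) (G.shape_app _)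

theorem realize_cell_eq_of_shape {α β : 𝒪} {m : ℕ} (d : (realize 𝒪 dim β).cell m)
    (hs : d.1.1 = α) : d = ⟨⟨α, eqToHom hs.symm ≫ d.1.2⟩, hs ▸ d.2⟩ := by
  obtain ⟨⟨x, f⟩, hm⟩ := d
  subst hs
  exact Subtype.ext (by simp)

variable (𝒪 dim)

def realizeFunctorFullyFaithful : (realizeFunctor 𝒪 dim).FullyFaithful where
  preimage {α β} F :=
    eqToHom (F.shape_app (realizeTopCell α)).symm ≫ (F.app _ (realizeTopCell α)).1.2
  map_preimage {α β} F := by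
    apply realize_hom_ext
    refine Eq.trans ?_ (realize_cell_eq_of_shape _ (F.shape_app (realizeTopCell α))).symm
    exact Subtype.ext (Sigma.ext rfl (heq_of_eq (Category.id_comp _)))
  preimage_map h := (Category.id_comp _).trans (Category.id_comp h)

/-- There is a full and faithful functor `G : 𝒪 → OSet` sending an
opetope `α` to its realization `α̂` and a morphism `h : α → β` to the morphism of opetopic
sets given by postcomposition with `h`. -/
theorem realizeFunctor_full_and_faithful :
    (realizeFunctor 𝒪 dim).Full ∧ (realizeFunctor 𝒪 dim).Faithful :=
  ⟨(realizeFunctorFullyFaithful 𝒪 dim).full, (realizeFunctorFullyFaithful 𝒪 dim).faithful⟩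
end

section
/- Let C be a cocomplete category admitting a set E of small-projective objects constituting a strong generator. Then C is equivalent to the presheaf category [Ɛ^op, Set], where Ɛ is the full subcategory of C on the objects of E, via the restricted Yoneda functor X ↦ C(−, X)|_{Ɛ}. -/
/-!
Since `C` is cocomplete, the restricted Yoneda functor `R : C ⥤ [Ɛᵒᵖ, Set]` has a left adjoint
`L`, the Yoneda extension of the inclusion `Ɛ ⥤ C`. Small-projectivity of the objects of `Ɛ`
says exactly that `R` preserves colimits, so the unit `𝟭 ⟶ L ⋙ R` is a transformation between
cocontinuous functors on presheaves; it is invertible on representables because `Ɛ ⥤ C` is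
fully faithful, hence invertible everywhere. A triangle identity then makes `R ε` invertible,
and `R` reflects isomorphisms because `E` is a strong generator, so the counit `ε` is invertible
too. As `Ɛ` is only essentially small, the adjunction is built on a small model of it.
-/

open CategoryTheory Limits Opposite Functor

universe v u

namespace CategoryTheory

lemma Adjunction.isEquivalence_right_of_isIso_unit {C D : Type*} [Category C] [Category D]
    {L : C ⥤ D} {R : D ⥤ C} (adj : L ⊣ R) [IsIso adj.unit] [R.ReflectsIsomorphisms] :
    R.IsEquivalence := by
  have := adj.fullyFaithfulLOfIsIsoUnit.full
  have := adj.fullyFaithfulLOfIsIsoUnit.faithful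
  have : ∀ X, IsIso (adj.counit.app X) := fun X => isIso_of_reflects_iso _ R
  have : IsIso adj.counit := NatIso.isIso_of_isIso_app _
  exact adj.toEquivalence.isEquivalence_inverse

namespace Presheaf

section

variable {S : Type v} [SmallCategory S]

lemma isIso_of_isIso_app_uliftYoneda_obj {D : Type*} [Category D]
    {F G : (Sᵒᵖ ⥤ Type v) ⥤ D} [PreservesColimitsOfSize.{v, v} F]
    [PreservesColimitsOfSize.{v, v} G] (τ : F ⟶ G)
    [∀ P : S, IsIso (τ.app (uliftYoneda.{v}.obj P))] : IsIso τ := by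
  suffices ∀ Q, IsIso (τ.app Q) from NatIso.isIso_of_isIso_app τ
  intro Q
  let hF := isColimitOfPreserves F (colimitOfRepresentable.{v} Q)
  let hG := isColimitOfPreserves G (colimitOfRepresentable.{v} Q)
  have : ∀ x, IsIso ((whiskerLeft (functorToRepresentables.{v} Q) τ).app x) :=
    fun x => inferInstanceAs (IsIso (τ.app (uliftYoneda.{v}.obj x.unop.1.unop)))
  have : IsIso (whiskerLeft (functorToRepresentables.{v} Q) τ) := NatIso.isIso_of_isIso_app _
  let e := asIso (whiskerLeft (functorToRepresentables.{v} Q) τ)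
  have : τ.app Q = (hF.coconePointsIsoOfNatIso hG e).hom := by
    refine hF.hom_ext fun j => ?_
    exact (τ.naturality _).trans (hF.comp_coconePointsIsoOfNatIso_hom hG e j).symm
  rw [this]
  exact Iso.isIso_hom _

variable {C : Type u} [Category.{v} C] [HasColimitsOfSize.{v, v} C] (A : S ⥤ C)

noncomputable abbrev yonedaExtensionAdjunction :
    uliftYoneda.{v}.leftKanExtension A ⊣ restrictedULiftYoneda.{v} A :=
  uliftYonedaAdjunction.{0} _ (uliftYoneda.{v}.leftKanExtensionUnit A)

instance isIso_yonedaExtensionAdjunction_unit_app_uliftYoneda_obj [A.Full] [A.Faithful] (P : S) :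
    IsIso ((yonedaExtensionAdjunction A).unit.app (uliftYoneda.{v}.obj P)) := by
  let α := uliftYoneda.{v}.leftKanExtensionUnit A
  suffices ∀ Z : Sᵒᵖ, IsIso (((yonedaExtensionAdjunction A).unit.app
      (uliftYoneda.{v}.obj P)).app Z) from NatIso.isIso_of_isIso_app _
  intro Z
  -- the unit at `uliftYoneda.obj P` is `f ↦ A.map f ≫ α.app P`
  let e : ULift.{v} (Z.unop ⟶ P) ≃ ULift.{v} (A.obj Z.unop ⟶ _) :=
    Equiv.ulift.trans ((FullyFaithful.ofFullyFaithful A).homEquiv.trans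
      ((asIso (α.app P)).homToEquiv.trans Equiv.ulift.symm))
  have : ⇑(((yonedaExtensionAdjunction A).unit.app (uliftYoneda.{v}.obj P)).app Z) = e := by
    funext f
    have hf : uliftYonedaEquiv.symm f = uliftYoneda.{v}.map f.down :=
      uliftYonedaEquiv.symm_apply_eq.2 (uliftYonedaEquiv_uliftYoneda_map f.down).symm
    simp only [comp_obj, id_obj, uliftYonedaAdjunction_unit_app_app, hf, Equiv.coe_trans,
      Equiv.ulift_symm_apply, Equiv.ulift_apply, e]
    exact congrArg ULift.up (α.naturality f.down).symm
  rw [isIso_iff_bijective, this]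
  exact e.bijective

theorem isEquivalence_restrictedULiftYoneda [A.Full] [A.Faithful]
    [PreservesColimitsOfSize.{v, v} (restrictedULiftYoneda.{v} A)]
    [(restrictedULiftYoneda.{v} A).ReflectsIsomorphisms] :
    (restrictedULiftYoneda.{v} A).IsEquivalence := by
  have : IsIso (yonedaExtensionAdjunction A).unit := isIso_of_isIso_app_uliftYoneda_obj _
  exact (yonedaExtensionAdjunction A).isEquivalence_right_of_isIso_unit

end

variable {S : Type*} [Category.{v} S] {C : Type u} [Category.{v} C]

abbrev restrictedYoneda (A : S ⥤ C) : C ⥤ Sᵒᵖ ⥤ Type v :=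
  yoneda ⋙ (whiskeringLeft _ _ _).obj A.op

lemma preservesColimitsOfSize_restrictedYoneda (A : S ⥤ C)
    (h : ∀ P, PreservesColimitsOfSize.{v, v} (coyoneda.obj (op (A.obj P)))) :
    PreservesColimitsOfSize.{v, v} (restrictedYoneda A) :=
  preservesColimits_of_evaluation _ fun P => h P.unop

lemma reflectsIsomorphisms_restrictedYoneda (A : S ⥤ C)
    (h : ∀ {X Y : C} (f : X ⟶ Y), (∀ P, Function.Bijective fun g : A.obj P ⟶ X => g ≫ f) →
      IsIso f) :
    (restrictedYoneda A).ReflectsIsomorphisms where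
  reflects f _ := h f fun P =>
    (isIso_iff_bijective (((restrictedYoneda A).map f).app (op P))).1 inferInstance

theorem isEquivalence_restrictedYoneda [EssentiallySmall.{v} S] [HasColimitsOfSize.{v, v} C]
    (A : S ⥤ C) [A.Full] [A.Faithful]
    [PreservesColimitsOfSize.{v, v} (restrictedYoneda A)]
    [(restrictedYoneda A).ReflectsIsomorphisms] :
    (restrictedYoneda A).IsEquivalence := by
  let e := equivSmallModel.{v} S
  let W := (whiskeringLeft _ _ (Type v)).obj e.inverse.op
  let i : restrictedULiftYoneda.{v} (e.inverse ⋙ A) ≅ restrictedYoneda A ⋙ W :=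
    isoWhiskerRight uliftYonedaIsoYoneda _
  have := preservesColimits_of_natIso i.symm
  have := reflectsIsomorphisms_of_iso i.symm
  have := isEquivalence_restrictedULiftYoneda (e.inverse ⋙ A)
  have := isEquivalence_of_iso i
  exact isEquivalence_of_comp_right _ W

end Presheaf

end CategoryTheory

/-- Kelly, *Basic concepts of enriched category theory*, Theorem 5.26,
for `V = Set`.  Let `C` be a cocomplete category admitting a set `E` of small-projective
objects (objects `P` such that `C(P, −)` preserves small colimits) constituting a strong
generator (a morphism `F` is an isomorphism whenever `C(P, F)` is a bijection for all
`P ∈ E`).  Then `C` is equivalent to the presheaf category `[Ɛᵒᵖ, Set]`, where `Ɛ` is the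
full subcategory of `C` on the objects of `E`, via the restricted Yoneda functor
`X ↦ C(−, X)|_Ɛ`. -/
theorem kelly_presheaf_equivalence {C : Type u} [Category.{v} C]
    [HasColimitsOfSize.{v, v} C] (E : Set C) [Small.{v} E]
    (hproj : ∀ P ∈ E,
      Nonempty (PreservesColimitsOfSize.{v, v} (coyoneda.obj (Opposite.op P))))
    (hgen : ∀ {X Y : C} (F : X ⟶ Y),
      (∀ P ∈ E, Function.Bijective fun g : P ⟶ X => g ≫ F) → IsIso F) :
    (yoneda ⋙ (Functor.whiskeringLeft (ObjectProperty.FullSubcategory fun X => X ∈ E)ᵒᵖ Cᵒᵖ (Type v)).obj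
        (ObjectProperty.ι fun X => X ∈ E).op).IsEquivalence := by
  let ι := ObjectProperty.ι fun X => X ∈ E
  have := Presheaf.preservesColimitsOfSize_restrictedYoneda ι fun P =>
    (hproj P.obj P.property).some
  have := Presheaf.reflectsIsomorphisms_restrictedYoneda ι fun f hf =>
    hgen f fun P hP => hf ⟨P, hP⟩
  exact Presheaf.isEquivalence_restrictedYoneda ι
end
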